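/- Let P be an n-dimensional polyhedral cone in ℝⁿ, f a face of P, and e a face of f. With f_{(e;P)} = Lk(e;P) ∩ L(f), the link of f in P equals the link of f_{(e;P)} in Lk(e;P): Lk(f;P) = Lk(f_{(e;P)}; Lk(e;P)). -/

import Mathlib

/-!
Write `fe = Lk(e;P) ∩ L(f)`. Every `x ∈ f` is its orthogonal projection onto `L(e)` plus a point
of `fe` (the halfspaces through `e` do not see the projection), so `L(f) = L(e) + L(fe)` and
`L(f)ᗮ = L(e)ᗮ ∩ L(fe)ᗮ`. Hence both links use the same halfspaces, those with `uᵢ ⊥ f`, and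
the same orthogonality conditions. The factor `L(e)ᗮ` attached to each halfspace of `Lk(e;P)`
costs nothing because some `uᵢ` is orthogonal to `f`: a proper face of a polyhedral cone lies in
one of its facet hyperplanes.
-/

open scoped RealInnerProductSpace

/-- The link `Lk(g;P)` of a face `g` of the polyhedral cone `P = ⋂ᵢ {x | ⟪u i, x⟫ ≤ 0}`. -/
def lkCone (n m : ℕ) (u : Fin m → EuclideanSpace ℝ (Fin n))
    (g : Set (EuclideanSpace ℝ (Fin n))) : Set (EuclideanSpace ℝ (Fin n)) :=
  (⋂ i ∈ {i : Fin m | ∀ x ∈ g, ⟪u i, x⟫ = 0}, {x : EuclideanSpace ℝ (Fin n) | ⟪u i, x⟫ ≤ 0}) ∩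
    ((Submodule.span ℝ g)ᗮ : Set (EuclideanSpace ℝ (Fin n)))

/-- A (nonempty, proper) face of a convex cone `C ⊆ ℝⁿ`. -/
def IsFaceCone (n : ℕ) (C f : Set (EuclideanSpace ℝ (Fin n))) : Prop :=
  f.Nonempty ∧ f ≠ C ∧ ∃ w : EuclideanSpace ℝ (Fin n), w ≠ 0 ∧
    (∀ x ∈ C, ⟪w, x⟫ ≤ 0) ∧ f = {x ∈ C | ⟪w, x⟫ = 0}

section InnerProductSpace

variable {E : Type*} [NormedAddCommGroup E] [InnerProductSpace ℝ E]

theorem mem_orthogonal_span_iff {s : Set E} {v : E} :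
    v ∈ (Submodule.span ℝ s)ᗮ ↔ ∀ y ∈ s, ⟪v, y⟫ = 0 := by
  rw [← Submodule.span_singleton_le_iff_mem, ← Submodule.isOrtho_iff_le, Submodule.isOrtho_comm,
    Submodule.isOrtho_span]
  simp [real_inner_comm]

variable {ι : Type*}

def polyhedralCone (u : ι → E) : Set E := ⋂ i, {x | ⟪u i, x⟫ ≤ 0}

theorem mem_polyhedralCone {u : ι → E} {x : E} : x ∈ polyhedralCone u ↔ ∀ i, ⟪u i, x⟫ ≤ 0 :=
  Set.mem_iInter

/-- A nonzero functional that is nonpositive on a polyhedral cone cannot attain its maximum `0`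
at a point where every defining inequality is strict, since such a point is interior. -/
theorem exists_inner_eq_zero_of_supporting [Finite ι] {u : ι → E} {w : E} (hw : w ≠ 0)
    (hwP : ∀ x ∈ polyhedralCone u, ⟪w, x⟫ ≤ 0) :
    ∃ i, ∀ x ∈ polyhedralCone u, ⟪w, x⟫ = 0 → ⟪u i, x⟫ = 0 := by
  have := Fintype.ofFinite ι
  by_contra! h
  choose z hzP hzw hzu using h
  set y := ∑ i, z i
  have hy_neg : ∀ i, ⟪u i, y⟫ < 0 := fun i => by
    have hzi : ∀ j, ⟪u i, z j⟫ ≤ 0 := fun j => mem_polyhedralCone.1 (hzP j) i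
    calc ⟪u i, y⟫ = ∑ j, ⟪u i, z j⟫ := inner_sum _ _ _
      _ < ∑ _j : ι, (0 : ℝ) :=
        Finset.sum_lt_sum (fun j _ => hzi j) ⟨i, Finset.mem_univ _, (hzi i).lt_of_ne (hzu i)⟩
      _ = 0 := Finset.sum_const_zero
  have hwy : ⟪w, y⟫ = 0 := by simp [y, inner_sum, hzw]
  have hmax : IsLocalMax (innerSL ℝ w) y := by
    have hint : ∀ᶠ x in nhds y, ∀ i, ⟪u i, x⟫ < 0 := Filter.eventually_all.2 fun i =>
      (continuous_const.inner continuous_id).continuousAt.eventually_lt continuousAt_const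
        (hy_neg i)
    filter_upwards [hint] with x hx
    simpa [hwy] using hwP x (mem_polyhedralCone.2 fun i => (hx i).le)
  have hw0 : innerSL ℝ w = 0 := hmax.hasFDerivAt_eq_zero (innerSL ℝ w).hasFDerivAt
  exact hw (by simpa using congrArg (· w) hw0)

end InnerProductSpace

section Link

variable {n m : ℕ} {u : Fin m → EuclideanSpace ℝ (Fin n)} {C e f : Set (EuclideanSpace ℝ (Fin n))}

theorem IsFaceCone.subset (hf : IsFaceCone n C f) : f ⊆ C := by
  obtain ⟨-, -, w, -, -, rfl⟩ := hf
  exact Set.sep_subset C _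

theorem IsFaceCone.exists_mem_orthogonal_span (hf : IsFaceCone n (polyhedralCone u) f) :
    ∃ i, u i ∈ (Submodule.span ℝ f)ᗮ := by
  obtain ⟨-, -, w, hw, hwP, rfl⟩ := hf
  obtain ⟨i, hi⟩ := exists_inner_eq_zero_of_supporting hw hwP
  exact ⟨i, mem_orthogonal_span_iff.2 fun x hx => hi x hx.1 hx.2⟩

theorem sub_starProjection_mem_lkCone_inter_span (hef : e ⊆ f) (hfP : f ⊆ polyhedralCone u)
    {x : EuclideanSpace ℝ (Fin n)} (hx : x ∈ f) :
    x - (Submodule.span ℝ e).starProjection x ∈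
      lkCone n m u e ∩ (Submodule.span ℝ f : Set (EuclideanSpace ℝ (Fin n))) := by
  have hp := (Submodule.span ℝ e).starProjection_apply_mem x
  refine ⟨⟨Set.mem_iInter₂.2 fun i hi => ?_, Submodule.sub_starProjection_mem_orthogonal x⟩,
    Submodule.sub_mem _ (Submodule.subset_span hx) (Submodule.span_mono hef hp)⟩
  have hip : ⟪u i, (Submodule.span ℝ e).starProjection x⟫ = 0 :=
    Submodule.inner_left_of_mem_orthogonal hp (mem_orthogonal_span_iff.2 hi)
  simpa [inner_sub_right, hip] using mem_polyhedralCone.1 (hfP hx) i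

theorem span_eq_span_sup_span_lkCone_inter (hef : e ⊆ f) (hfP : f ⊆ polyhedralCone u) :
    Submodule.span ℝ f = Submodule.span ℝ e ⊔
      Submodule.span ℝ
        (lkCone n m u e ∩ (Submodule.span ℝ f : Set (EuclideanSpace ℝ (Fin n)))) := by
  refine le_antisymm (Submodule.span_le.2 fun x hx => ?_)
    (sup_le (Submodule.span_mono hef) (Submodule.span_le.2 Set.inter_subset_right))
  exact Submodule.mem_sup.2 ⟨_, (Submodule.span ℝ e).starProjection_apply_mem x, _,
    Submodule.subset_span (sub_starProjection_mem_lkCone_inter_span hef hfP hx), add_sub_cancel _ _⟩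

theorem orthogonal_span_eq_inf_orthogonal_span_lkCone_inter (hef : e ⊆ f)
    (hfP : f ⊆ polyhedralCone u) :
    (Submodule.span ℝ f)ᗮ = (Submodule.span ℝ e)ᗮ ⊓
      (Submodule.span ℝ
        (lkCone n m u e ∩ (Submodule.span ℝ f : Set (EuclideanSpace ℝ (Fin n)))))ᗮ := by
  rw [Submodule.inf_orthogonal, ← span_eq_span_sup_span_lkCone_inter hef hfP]

end Link

theorem stmt14_general (n m : ℕ) (u : Fin m → EuclideanSpace ℝ (Fin n))
    (P : Set (EuclideanSpace ℝ (Fin n)))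
    (hP : P = ⋂ i, {x : EuclideanSpace ℝ (Fin n) | ⟪u i, x⟫ ≤ 0})
    (f e : Set (EuclideanSpace ℝ (Fin n)))
    (hf : IsFaceCone n P f) (he : IsFaceCone n f e)
    (fe : Set (EuclideanSpace ℝ (Fin n)))
    (hfe : fe = lkCone n m u e ∩ (Submodule.span ℝ f : Set (EuclideanSpace ℝ (Fin n)))) :
    lkCone n m u f =
      (⋂ i ∈ {i : Fin m | (∀ x ∈ e, ⟪u i, x⟫ = 0) ∧ ∀ x ∈ fe, ⟪u i, x⟫ = 0},
        ({x : EuclideanSpace ℝ (Fin n) | ⟪u i, x⟫ ≤ 0} ∩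
          ((Submodule.span ℝ e)ᗮ : Set (EuclideanSpace ℝ (Fin n))))) ∩
      ((Submodule.span ℝ fe)ᗮ : Set (EuclideanSpace ℝ (Fin n))) := by
  change P = polyhedralCone u at hP
  subst hP
  obtain ⟨i₀, hi₀⟩ := hf.exists_mem_orthogonal_span
  have hperp : ∀ v, v ∈ (Submodule.span ℝ f)ᗮ ↔
      v ∈ (Submodule.span ℝ e)ᗮ ∧ v ∈ (Submodule.span ℝ fe)ᗮ := fun v => by
    rw [hfe, orthogonal_span_eq_inf_orthogonal_span_lkCone_inter he.subset hf.subset,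
      Submodule.mem_inf]
  ext x
  simp only [lkCone, ← mem_orthogonal_span_iff, ← hperp, Set.mem_inter_iff, Set.mem_iInter,
    Set.mem_ofPred_eq, SetLike.mem_coe]
  constructor
  · rintro ⟨hx, hxf⟩
    obtain ⟨hxe, hxfe⟩ := (hperp x).1 hxf
    exact ⟨fun i hi => ⟨hx i hi, hxe⟩, hxfe⟩
  · rintro ⟨hx, hxfe⟩
    exact ⟨fun i hi => (hx i hi).1, (hperp x).2 ⟨(hx i₀ hi₀).2, hxfe⟩⟩

/-- For an `n`-dimensional polyhedral cone `P ⊆ ℝⁿ` given by an irredundant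
family of halfspaces, a face `f` of `P` and a face `e` of `f`, writing
`fe = f_{(e;P)} = Lk(e;P) ∩ L(f)`, the link of `f` in `P` equals the link of `fe` in
`Lk(e;P)`, the latter being formed from the defining halfspaces `Hᵢ⁺ ∩ L(e)^⊥` of `Lk(e;P)`
whose bounding hyperplane contains `fe`, intersected with `L(fe)^⊥`. -/
theorem stmt14 (n m : ℕ) (u : Fin m → EuclideanSpace ℝ (Fin n)) (hu : ∀ i, u i ≠ 0)
    (P : Set (EuclideanSpace ℝ (Fin n)))
    (hP : P = ⋂ i, {x : EuclideanSpace ℝ (Fin n) | ⟪u i, x⟫ ≤ 0})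
    (hirr : ∀ i : Fin m,
      (⋂ j ∈ {j : Fin m | j ≠ i}, {x : EuclideanSpace ℝ (Fin n) | ⟪u j, x⟫ ≤ 0}) ≠ P)
    (hfull : Submodule.span ℝ P = ⊤)
    (f e : Set (EuclideanSpace ℝ (Fin n)))
    (hf : IsFaceCone n P f) (he : IsFaceCone n f e)
    (fe : Set (EuclideanSpace ℝ (Fin n)))
    (hfe : fe = lkCone n m u e ∩ (Submodule.span ℝ f : Set (EuclideanSpace ℝ (Fin n)))) :
    lkCone n m u f =
      (⋂ i ∈ {i : Fin m | (∀ x ∈ e, ⟪u i, x⟫ = 0) ∧ ∀ x ∈ fe, ⟪u i, x⟫ = 0},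
        ({x : EuclideanSpace ℝ (Fin n) | ⟪u i, x⟫ ≤ 0} ∩
          ((Submodule.span ℝ e)ᗮ : Set (EuclideanSpace ℝ (Fin n))))) ∩
      ((Submodule.span ℝ fe)ᗮ : Set (EuclideanSpace ℝ (Fin n))) :=
  stmt14_general n m u P hP f e hf he fe hfe
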